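/- For a partition λ of n, let b_{λ,i} denote the number of standard Young tableaux of shape λ with major index i; then b_{λ,i} = b_{λ', n(n−1)/2 − i}, where λ' is the conjugate partition. -/

import Mathlib

open Finset

/-- `T` is a standard Young tableau of shape `μ` (values `0, …, μ.card − 1`):
a bijective filling of the cells of `μ`, strictly increasing along rows and columns,
normalized to be `0` outside `μ`. -/
def IsSYT (μ : YoungDiagram) (T : ℕ × ℕ → ℕ) : Prop :=
  Set.BijOn T ↑μ.cells (Set.Iio μ.card) ∧
  (∀ c ∈ μ.cells, ∀ c' ∈ μ.cells, c.1 = c'.1 → c.2 < c'.2 → T c < T c') ∧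
  (∀ c ∈ μ.cells, ∀ c' ∈ μ.cells, c.2 = c'.2 → c.1 < c'.1 → T c < T c') ∧
  (∀ c, c ∉ μ.cells → T c = 0)

/-- The row index of the cell of `μ` containing the value `v` in the filling `T`. -/
def rowOfValue (μ : YoungDiagram) (T : ℕ × ℕ → ℕ) (v : ℕ) : ℕ :=
  (μ.cells.filter fun c => T c = v).sup Prod.fst

/-- The major index of the tableau `T`: the sum of the (1-based) entries `j` such that
`j + 1` lies in a strictly lower row than `j`.  With our 0-based values `v`, the value
`v` contributes `v + 1` when `v + 1` lies in a lower row than `v`. -/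
def majT (μ : YoungDiagram) (T : ℕ × ℕ → ℕ) : ℕ :=
  ∑ v ∈ Finset.range (μ.card - 1),
    if rowOfValue μ T v < rowOfValue μ T (v + 1) then v + 1 else 0

/-- The fake degree `b_{λ,i}`: the number of standard Young tableaux of shape `λ`
with major index `i`. -/
noncomputable def fakeDeg (μ : YoungDiagram) (i : ℕ) : ℕ :=
  Set.ncard {T : ℕ × ℕ → ℕ | IsSYT μ T ∧ majT μ T = i}

/-- `f^λ`: the number of standard Young tableaux of shape `λ`. -/
noncomputable def sytCount (μ : YoungDiagram) : ℕ :=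
  Set.ncard {T : ℕ × ℕ → ℕ | IsSYT μ T}

/-- The Young diagram of a partition of `n`. -/
def shapeOf {n : ℕ} (p : Nat.Partition n) : YoungDiagram :=
  YoungDiagram.ofRowLens (p.parts.sort (· ≥ ·)) (p.parts.pairwise_sort _).sortedGE

lemma card_transpose' (μ : YoungDiagram) : μ.transpose.card = μ.card := by
  apply Finset.card_nbij (i := Prod.swap)
  · intro c hc; simpa [YoungDiagram.mem_cells, YoungDiagram.mem_transpose] using hc
  · intro a _ b _ h; exact Prod.swap_injective h
  · intro c hc
    exact ⟨c.swap, by simpa [YoungDiagram.mem_cells, YoungDiagram.mem_transpose] using hc, by simp⟩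

lemma isSYT_swap {μ : YoungDiagram} {T : ℕ × ℕ → ℕ} (h : IsSYT μ T) :
    IsSYT μ.transpose (fun c => T c.swap) := by
  obtain ⟨hbij, hrow, hcol, hz⟩ := h
  have hswap : Set.BijOn Prod.swap (↑μ.transpose.cells) (↑μ.cells : Set (ℕ × ℕ)) := by
    refine ⟨?_, fun a _ b _ hab => Prod.swap_injective hab, ?_⟩
    · intro c hc; simpa [YoungDiagram.mem_cells, YoungDiagram.mem_transpose] using hc
    · intro c hc
      exact ⟨c.swap, by simpa [YoungDiagram.mem_cells, YoungDiagram.mem_transpose] using hc, by simp⟩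
  refine ⟨?_, ?_, ?_, ?_⟩
  · rw [card_transpose']
    exact hbij.comp hswap
  · intro c hc c' hc' h1 h2
    exact hcol c.swap (by simpa [YoungDiagram.mem_transpose] using hc)
      c'.swap (by simpa [YoungDiagram.mem_transpose] using hc') h1 h2
  · intro c hc c' hc' h1 h2
    exact hrow c.swap (by simpa [YoungDiagram.mem_transpose] using hc)
      c'.swap (by simpa [YoungDiagram.mem_transpose] using hc') h1 h2
  · intro c hc
    exact hz c.swap (by simpa [YoungDiagram.mem_transpose] using hc)

lemma rowOfValue_eq {μ : YoungDiagram} {T : ℕ × ℕ → ℕ} (h : IsSYT μ T)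
    {c : ℕ × ℕ} (hc : c ∈ μ.cells) {v : ℕ} (hv : T c = v) :
    rowOfValue μ T v = c.1 := by
  have : μ.cells.filter (fun d => T d = v) = {c} := by
    ext d
    simp only [Finset.mem_filter, Finset.mem_singleton]
    constructor
    · rintro ⟨hd, hdv⟩
      exact h.1.injOn hd hc (hdv.trans hv.symm)
    · rintro rfl; exact ⟨hc, hv⟩
  rw [rowOfValue, this, Finset.sup_singleton]

/-- unique cell containing a given value -/
lemma exists_cell {μ : YoungDiagram} {T : ℕ × ℕ → ℕ} (h : IsSYT μ T)
    {v : ℕ} (hv : v < μ.card) : ∃ c ∈ μ.cells, T c = v := by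
  obtain ⟨c, hc, hcv⟩ := h.1.surjOn (Set.mem_Iio.mpr hv)
  exact ⟨c, hc, hcv⟩

/-- In a SYT neither both coordinates weakly decrease nor both strictly increase
from the cell of `v` to the cell of `v+1`. -/
lemma descent_dichotomy {μ : YoungDiagram} {T : ℕ × ℕ → ℕ} (h : IsSYT μ T)
    {c d : ℕ × ℕ} (hc : c ∈ μ.cells) (hd : d ∈ μ.cells) {v : ℕ}
    (hcv : T c = v) (hdv : T d = v + 1) : (c.1 < d.1 ↔ ¬ c.2 < d.2) := by
  obtain ⟨hbij, hrow, hcol, hz⟩ := h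
  constructor
  · intro h1 h2
    -- cell (c.1, d.2) between them
    have hm : (c.1, d.2) ∈ μ.cells := by
      rw [YoungDiagram.mem_cells] at *
      exact μ.up_left_mem (le_of_lt h1) le_rfl hd
    have e1 : T c < T (c.1, d.2) := hrow c hc _ hm rfl h2
    have e2 : T (c.1, d.2) < T d := hcol _ hm d hd rfl h1
    omega
  · intro h2
    by_contra h1
    push_neg at h1 h2
    -- d.1 ≤ c.1, d.2 ≤ c.2 : show T d < T c or d = c, contradiction
    have hm : (d.1, c.2) ∈ μ.cells := by
      rw [YoungDiagram.mem_cells] at *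
      exact μ.up_left_mem h1 le_rfl hc
    rcases lt_or_eq_of_le h2 with h2' | h2'
    · have e1 : T d < T (d.1, c.2) := hrow d hd _ hm rfl h2'
      have e2 : T (d.1, c.2) ≤ T c := by
        rcases lt_or_eq_of_le h1 with h1' | h1'
        · exact le_of_lt (hcol _ hm c hc rfl h1')
        · rw [show (d.1, c.2) = c from Prod.ext h1' rfl]
      omega
    · rcases lt_or_eq_of_le h1 with h1' | h1'
      · have : T d < T c := by
          have := hcol d hd c hc h2' h1'
          exact this
        omega
      · have hdc : d = c := Prod.ext h1' h2'
        rw [hdc] at hdv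
        omega

lemma majT_swap {μ : YoungDiagram} {T : ℕ × ℕ → ℕ} (h : IsSYT μ T) :
    majT μ.transpose (fun c => T c.swap) = μ.card * (μ.card - 1) / 2 - majT μ T := by
  have hS := isSYT_swap h
  have key : ∀ v ∈ Finset.range (μ.card - 1),
      (if rowOfValue μ.transpose (fun c => T c.swap) v <
          rowOfValue μ.transpose (fun c => T c.swap) (v + 1) then v + 1 else 0)
      = (v + 1) - (if rowOfValue μ T v < rowOfValue μ T (v + 1) then v + 1 else 0) := by
    intro v hv
    rw [Finset.mem_range] at hv
    have hv1 : v < μ.card := by omega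
    have hv2 : v + 1 < μ.card := by omega
    obtain ⟨c, hc, hcv⟩ := exists_cell h hv1
    obtain ⟨d, hd, hdv⟩ := exists_cell h hv2
    have hcs : c.swap ∈ μ.transpose.cells := by
      simpa [YoungDiagram.mem_transpose] using hc
    have hds : d.swap ∈ μ.transpose.cells := by
      simpa [YoungDiagram.mem_transpose] using hd
    have r1 : rowOfValue μ T v = c.1 := rowOfValue_eq h hc hcv
    have r2 : rowOfValue μ T (v + 1) = d.1 := rowOfValue_eq h hd hdv
    have r3 : rowOfValue μ.transpose (fun c => T c.swap) v = c.2 :=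
      rowOfValue_eq hS hcs (by simpa using hcv)
    have r4 : rowOfValue μ.transpose (fun c => T c.swap) (v + 1) = d.2 :=
      rowOfValue_eq hS hds (by simpa using hdv)
    have dich := descent_dichotomy h hc hd hcv hdv
    rw [r1, r2, r3, r4]
    by_cases hcase : c.1 < d.1
    · rw [if_neg (dich.mp hcase), if_pos hcase]; simp
    · rw [if_pos (by by_contra hh; exact hcase (dich.mpr hh)), if_neg hcase]; omega
  unfold majT
  rw [card_transpose', Finset.sum_congr rfl key]
  have hbound : ∀ v ∈ Finset.range (μ.card - 1),
      (if rowOfValue μ T v < rowOfValue μ T (v + 1) then v + 1 else 0) ≤ v + 1 := by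
    intro v _; split <;> omega
  rw [Finset.sum_tsub_distrib (Finset.range (μ.card - 1)) hbound]
  congr 1
  have h4 : ∑ v ∈ Finset.range (μ.card - 1), (v + 1) = ∑ v ∈ Finset.range μ.card, v := by
    cases μ.card with
    | zero => simp
    | succ m => simp [Finset.sum_range_succ', Nat.succ_sub_one]
  have h5 := Finset.sum_range_id_mul_two μ.card
  omega

lemma majT_le {μ : YoungDiagram} (T : ℕ × ℕ → ℕ) :
    majT μ T ≤ μ.card * (μ.card - 1) / 2 := by
  have : majT μ T ≤ ∑ v ∈ Finset.range (μ.card - 1), (v + 1) := by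
    apply Finset.sum_le_sum; intro v _; split <;> omega
  have h2 : ∑ v ∈ Finset.range (μ.card - 1), (v + 1) = μ.card * (μ.card - 1) / 2 := by
    have h4 : ∑ v ∈ Finset.range (μ.card - 1), (v + 1) = ∑ v ∈ Finset.range μ.card, v := by
      cases μ.card with
      | zero => simp
      | succ m => simp [Finset.sum_range_succ', Nat.succ_sub_one]
    have h5 := Finset.sum_range_id_mul_two μ.card
    omega
  omega

/-- `b_{λ,i} = b_{λ', n(n−1)/2 − i}`: the number of standard Young tableaux of shape
`λ ⊢ n` with major index `i` equals the number of standard Young tableaux of the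
conjugate shape `λ'` with major index `n(n−1)/2 − i`. -/
theorem fakeDeg_transpose_duality (n : ℕ) (μ : YoungDiagram) (hμ : μ.card = n)
    (i : ℕ) (hi : i ≤ n * (n - 1) / 2) :
    fakeDeg μ i = fakeDeg μ.transpose (n * (n - 1) / 2 - i) := by
  subst hμ
  unfold fakeDeg
  set N := μ.card * (μ.card - 1) / 2 with hN
  have hΦinj : Function.Injective (fun (T : ℕ × ℕ → ℕ) => fun c : ℕ × ℕ => T c.swap) := by
    intro T S hTS
    funext c
    have := congrFun hTS c.swap
    simpa using this
  have himg : {T : ℕ × ℕ → ℕ | IsSYT μ.transpose T ∧ majT μ.transpose T = N - i}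
      = (fun (T : ℕ × ℕ → ℕ) => fun c : ℕ × ℕ => T c.swap) ''
        {T : ℕ × ℕ → ℕ | IsSYT μ T ∧ majT μ T = i} := by
    ext S
    simp only [Set.mem_image, Set.mem_setOf_eq]
    constructor
    · rintro ⟨hS, hSmaj⟩
      refine ⟨fun c => S c.swap, ⟨?_, ?_⟩, by funext c; simp⟩
      · have := isSYT_swap hS
        rwa [YoungDiagram.transpose_transpose] at this
      · have h1 := majT_swap hS
        rw [YoungDiagram.transpose_transpose, card_transpose', hSmaj] at h1
        rw [h1]
        have := majT_le (μ := μ.transpose) S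
        rw [card_transpose'] at this
        omega
    · rintro ⟨T, ⟨hT, hTmaj⟩, rfl⟩
      refine ⟨isSYT_swap hT, ?_⟩
      rw [majT_swap hT, hTmaj]
  rw [himg, Set.ncard_image_of_injective _ hΦinj]
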